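/- arXiv:2204.14212 — 5 statements merged into one kernel-verified Lean document; each statement's English description precedes it below -/
import Mathlib

section
/- For digraphs G and H with nonempty vertex sets, the dichromatic number of their cartesian product equals the maximum of their dichromatic numbers: χ_a(G □ H) = max{χ_a(G), χ_a(H)}. -/
/-- A directed cycle in the digraph with arc relation `Adj`: a list of at least two
distinct vertices with an arc between consecutive vertices and an arc from the last
vertex back to the first. -/
def IsDicycle {V : Type*} (Adj : V → V → Prop) (l : List V) : Prop :=
  2 ≤ l.length ∧ l.Nodup ∧ l.Chain' Adj ∧
    ∀ h : l ≠ [], Adj (l.getLast h) (l.head h)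

/-- A set of vertices is acyclic if the induced subdigraph contains no directed cycle. -/
def AcyclicSet {V : Type*} (Adj : V → V → Prop) (S : Set V) : Prop :=
  ¬ ∃ l : List V, (∀ v ∈ l, v ∈ S) ∧ IsDicycle Adj l

/-- A coloring is acyclic if every color class is an acyclic set. -/
def IsAcyclicColoring {V C : Type*} (Adj : V → V → Prop) (f : V → C) : Prop :=
  ∀ c : C, AcyclicSet Adj (f ⁻¹' {c})

/-- The dichromatic number: the least `k` admitting an acyclic `k`-coloring. -/
noncomputable def dichromaticNumber {V : Type*} (Adj : V → V → Prop) : ℕ :=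
  sInf {k : ℕ | ∃ f : V → Fin k, IsAcyclicColoring Adj f}

/-- Cartesian product of digraphs. -/
def cartAdj {V W : Type*} (GA : V → V → Prop) (HA : W → W → Prop) :
    V × W → V × W → Prop :=
  fun p q => (p.1 = q.1 ∧ HA p.2 q.2) ∨ (GA p.1 q.1 ∧ p.2 = q.2)

/-- Direct product of digraphs. -/
def directAdj {V W : Type*} (GA : V → V → Prop) (HA : W → W → Prop) :
    V × W → V × W → Prop :=
  fun p q => GA p.1 q.1 ∧ HA p.2 q.2

/-- Strong product of digraphs. -/
def strongAdj {V W : Type*} (GA : V → V → Prop) (HA : W → W → Prop) :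
    V × W → V × W → Prop :=
  fun p q => (p.1 = q.1 ∧ HA p.2 q.2) ∨ (GA p.1 q.1 ∧ p.2 = q.2) ∨
    (GA p.1 q.1 ∧ HA p.2 q.2)

/-- Lexicographic product of digraphs. -/
def lexAdj {V W : Type*} (GA : V → V → Prop) (HA : W → W → Prop) :
    V × W → V × W → Prop :=
  fun p q => GA p.1 q.1 ∨ (p.1 = q.1 ∧ HA p.2 q.2)

/-- The dicycle on `n` vertices: arcs `i → i + 1` on `ZMod n`. -/
def dicycleAdj (n : ℕ) : ZMod n → ZMod n → Prop := fun i j => j = i + 1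

/-- The complete digraph on `k` vertices. -/
def completeAdj (k : ℕ) : Fin k → Fin k → Prop := fun i j => i ≠ j

/-!
On a finite digraph a colouring is acyclic iff it admits a rank `r : V → ℕ` that strictly
increases along every arc `u → v` (with `u ≠ v`) inside a colour class: a closed walk contains a
dicycle, so within an acyclic class "`u` reaches `v`" is a strict order, and the number of
vertices reaching `v` is a rank.

Given acyclic colourings `f` of `G` and `g` of `H` with values in `Fin k`, colour `(u, x)` by
`f u + g x`. An arc of `G □ H` moves only one coordinate, so when it stays in one colour class
it preserves both `f` and `g`; hence `rG u + rH x` is a rank for this colouring. Conversely, an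
acyclic colouring of `G □ H` restricts to the copies `G × {x}` and `{u} × H`.
-/

open Relation

section Dicycles

variable {V W : Type*}

theorem List.exists_eq_append_cons_append_cons_of_not_nodup {l : List V} (hl : ¬l.Nodup) :
    ∃ a s t u, l = s ++ a :: (t ++ a :: u) := by
  obtain ⟨a, ha⟩ : ∃ a, List.Sublist [a, a] l := by simpa [List.nodup_iff_sublist] using hl
  obtain ⟨r₁, r₂, rfl, ha₁, ha₂⟩ := List.cons_sublist_iff.mp ha
  obtain ⟨s, t, rfl⟩ := List.append_of_mem ha₁
  obtain ⟨t', u, rfl⟩ := List.append_of_mem (List.singleton_sublist.mp ha₂)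
  exact ⟨a, s, t ++ t', u, by simp⟩

theorem List.Nodup.isChain_and_ne {R : V → V → Prop} {l : List V} (hl : l.Nodup)
    (h : List.IsChain R l) : List.IsChain (fun a b => R a b ∧ a ≠ b) l := by
  induction l using List.twoStepInduction <;> grind

theorem IsDicycle.map {R : V → V → Prop} {R' : W → W → Prop} {φ : V → W}
    (hφ : Function.Injective φ) (hR : ∀ a b, R a b → R' (φ a) (φ b)) {l : List V}
    (hl : IsDicycle R l) : IsDicycle R' (l.map φ) := by
  obtain ⟨hlen, hnodup, hchain, hclose⟩ := hl
  refine ⟨by simpa using hlen, hnodup.map hφ, (List.isChain_map φ).mpr (hchain.imp hR),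
    fun hne => ?_⟩
  rw [List.getLast_map, List.head_map]
  exact hR _ _ (hclose _)

variable {R : V → V → Prop}

/-- If the closed walk repeats a vertex, the closed subwalk between two occurrences is shorter. -/
theorem exists_isDicycle_of_isChain_cons (hR : ∀ a, ¬R a a) (x : V) (l : List V)
    (hchain : List.IsChain R (x :: l)) (hlast : l.getLast? = some x) : ∃ c, IsDicycle R c := by
  induction hn : l.length using Nat.strong_induction_on generalizing x l with
  | _ n ih =>
  by_cases hnd : l.Nodup
  · match l, hchain, hlast, hnd with
    | [y], hchain, hlast, _ =>
      obtain rfl : y = x := by simpa using hlast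
      exact absurd (List.isChain_pair.mp hchain) (hR y)
    | y :: z :: t, hchain, hlast, hnd =>
      refine ⟨y :: z :: t, by simp, hnd, hchain.tail, fun hne => ?_⟩
      rw [List.getLast?_eq_some_getLast hne, Option.some_inj] at hlast
      rw [hlast]
      exact (List.isChain_cons_cons.mp hchain).1
  · obtain ⟨a, s, t, u, rfl⟩ := List.exists_eq_append_cons_append_cons_of_not_nodup hnd
    refine ih (t.length + 1) (by simp at hn; omega) a (t ++ [a]) ?_ (by simp) (by simp)
    exact hchain.infix ⟨x :: s, u, by simp⟩

theorem exists_isDicycle_of_transGen (hR : ∀ a, ¬R a a) {x : V} (h : TransGen R x x) :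
    ∃ c, IsDicycle R c := by
  obtain ⟨y, hxy, hyx⟩ := TransGen.head'_iff.mp h
  obtain ⟨l, hl, hlast⟩ := List.exists_isChain_cons_of_relationReflTransGen hyx
  refine exists_isDicycle_of_isChain_cons hR x (y :: l) (hl.cons_cons hxy) ?_
  rw [List.getLast?_eq_some_getLast (List.cons_ne_nil y l), hlast]

theorem exists_rank_of_forall_not_isDicycle [Finite V] (hR : ∀ a, ¬R a a)
    (h : ∀ c, ¬IsDicycle R c) : ∃ r : V → ℕ, ∀ u v, R u v → r u < r v := by
  refine ⟨fun v => {w | TransGen R w v}.ncard, fun u v huv => Set.ncard_lt_ncard ?_ ?_⟩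
  · refine Set.ssubset_iff_subset_ne.mpr ⟨fun w hw => hw.tail huv, fun heq => ?_⟩
    have hu : u ∈ {w | TransGen R w v} := TransGen.single huv
    rw [← heq] at hu
    obtain ⟨c, hc⟩ := exists_isDicycle_of_transGen hR hu
    exact h c hc
  · exact Set.toFinite _

end Dicycles

section Rank

variable {V W C : Type*} {Adj : V → V → Prop}

theorem acyclicSet_of_rank {S : Set V} (r : V → ℕ)
    (hr : ∀ u ∈ S, ∀ v ∈ S, Adj u v → u ≠ v → r u < r v) : AcyclicSet Adj S := by
  rintro ⟨l, hS, hlen, hnodup, hchain, hclose⟩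
  obtain ⟨a, l, rfl⟩ : ∃ a l', l = a :: l' := List.exists_cons_of_length_pos (by omega)
  have hmono : List.IsChain (fun u v => r u < r v) (a :: l) :=
    (hnodup.isChain_and_ne hchain).imp_of_mem_imp
      fun u v hu hv huv => hr u (hS u hu) v (hS v hv) huv.1 huv.2
  have hle : r a ≤ r ((a :: l).getLast (List.cons_ne_nil a l)) :=
    hmono.induction (fun v => r a ≤ r v) _ (fun _ _ h h' => h'.trans h.le) (fun _ => le_rfl) _
      (List.getLast_mem _)
  have hne : (a :: l).getLast (List.cons_ne_nil a l) ≠ a := by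
    have hl : l ≠ [] := by rintro rfl; simp at hlen
    rw [List.getLast_cons hl]
    exact fun h => (List.nodup_cons.mp hnodup).1 (h ▸ List.getLast_mem hl)
  have hlt := hr _ (hS _ (List.getLast_mem _)) a (hS a List.mem_cons_self)
    (hclose (List.cons_ne_nil a l)) hne
  exact absurd hle (not_le.mpr hlt)

theorem AcyclicSet.exists_rank [Finite V] {S : Set V} (hS : AcyclicSet Adj S) :
    ∃ r : V → ℕ, ∀ u ∈ S, ∀ v ∈ S, Adj u v → u ≠ v → r u < r v := by
  classical
  obtain ⟨r, hr⟩ := exists_rank_of_forall_not_isDicycle (R := fun a b : S => Adj a b ∧ a ≠ b)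
    (fun a h => h.2 rfl)
    fun c hc => hS ⟨c.map Subtype.val, by simp +contextual,
      hc.map Subtype.val_injective fun a b h => h.1⟩
  refine ⟨fun v => if hv : v ∈ S then r ⟨v, hv⟩ else 0, fun u hu v hv huv hne => ?_⟩
  simpa [hu, hv] using hr ⟨u, hu⟩ ⟨v, hv⟩ ⟨huv, Subtype.coe_ne_coe.mp hne⟩

theorem isAcyclicColoring_of_rank {f : V → C} (r : V → ℕ)
    (hr : ∀ u v, Adj u v → u ≠ v → f u = f v → r u < r v) : IsAcyclicColoring Adj f :=
  fun _ => acyclicSet_of_rank r fun u hu v hv huv hne => hr u v huv hne (hu.trans hv.symm)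

theorem IsAcyclicColoring.exists_rank [Finite V] {f : V → C} (hf : IsAcyclicColoring Adj f) :
    ∃ r : V → ℕ, ∀ u v, Adj u v → u ≠ v → f u = f v → r u < r v := by
  choose r hr using fun c => (hf c).exists_rank
  refine ⟨fun v => r (f v) v, fun u v huv hne hcol => ?_⟩
  simpa only [hcol] using hr (f u) u rfl v hcol.symm huv hne

theorem isAcyclicColoring_of_injective {f : V → C} (hf : Function.Injective f) :
    IsAcyclicColoring Adj f :=
  isAcyclicColoring_of_rank 0 fun _ _ _ hne hcol => absurd (hf hcol) hne

theorem IsAcyclicColoring.comp_injective {D : Type*} {f : V → C} (hf : IsAcyclicColoring Adj f)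
    {e : C → D} (he : Function.Injective e) : IsAcyclicColoring Adj (e ∘ f) := by
  rintro c ⟨l, hl, hcyc⟩
  have hne : l ≠ [] := List.ne_nil_of_length_pos (by linarith [hcyc.1])
  exact hf (f (l.head hne))
    ⟨l, fun v hv => he ((hl v hv).trans (hl _ (List.head_mem hne)).symm), hcyc⟩

theorem IsAcyclicColoring.comp_of_map_adj {Adj' : W → W → Prop} {f : W → C}
    (hf : IsAcyclicColoring Adj' f) {φ : V → W} (hφ : Function.Injective φ)
    (hadj : ∀ u v, Adj u v → Adj' (φ u) (φ v)) : IsAcyclicColoring Adj (f ∘ φ) :=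
  fun c ⟨l, hl, hcyc⟩ => hf c ⟨l.map φ, by simpa using hl, hcyc.map hφ hadj⟩

end Rank

section Product

variable {V W C : Type*} {GA : V → V → Prop} {HA : W → W → Prop}

theorem IsAcyclicColoring.cartAdj_add [Finite V] [Finite W] [Add C] [IsCancelAdd C]
    {f : V → C} {g : W → C} (hf : IsAcyclicColoring GA f) (hg : IsAcyclicColoring HA g) :
    IsAcyclicColoring (cartAdj GA HA) (fun p => f p.1 + g p.2) := by
  obtain ⟨rG, hrG⟩ := hf.exists_rank
  obtain ⟨rH, hrH⟩ := hg.exists_rank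
  refine isAcyclicColoring_of_rank (fun p => rG p.1 + rH p.2) ?_
  rintro ⟨u, x⟩ ⟨v, y⟩ (⟨rfl, hxy⟩ | ⟨huv, rfl⟩) hne hcol
  · exact Nat.add_lt_add_left (hrH x y hxy (fun h => hne (h ▸ rfl)) (add_left_cancel hcol)) _
  · exact Nat.add_lt_add_right (hrG u v huv (fun h => hne (h ▸ rfl)) (add_right_cancel hcol)) _

end Product

section DichromaticNumber

variable {V : Type*} {Adj : V → V → Prop}

theorem dichromaticNumber_le {k : ℕ} {f : V → Fin k} (hf : IsAcyclicColoring Adj f) :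
    dichromaticNumber Adj ≤ k :=
  Nat.sInf_le ⟨f, hf⟩

theorem exists_isAcyclicColoring_dichromaticNumber [Finite V] (Adj : V → V → Prop) :
    ∃ f : V → Fin (dichromaticNumber Adj), IsAcyclicColoring Adj f := by
  obtain ⟨n, ⟨e⟩⟩ := Finite.exists_equiv_fin V
  exact Nat.sInf_mem (s := {k | ∃ f : V → Fin k, IsAcyclicColoring Adj f})
    ⟨n, e, isAcyclicColoring_of_injective e.injective⟩

end DichromaticNumber

theorem stmt0_general {V W : Type*} [Fintype V] [Fintype W] [Nonempty V] [Nonempty W]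
    (GA : V → V → Prop) (HA : W → W → Prop) :
    dichromaticNumber (cartAdj GA HA) =
      max (dichromaticNumber GA) (dichromaticNumber HA) := by
  obtain ⟨f, hf⟩ := exists_isAcyclicColoring_dichromaticNumber GA
  obtain ⟨g, hg⟩ := exists_isAcyclicColoring_dichromaticNumber HA
  obtain ⟨h, hh⟩ := exists_isAcyclicColoring_dichromaticNumber (cartAdj GA HA)
  refine le_antisymm ?_ (max_le ?_ ?_)
  · exact dichromaticNumber_le
      ((hf.comp_injective (Fin.castLE_injective (le_max_left _ _))).cartAdj_add
        (hg.comp_injective (Fin.castLE_injective (le_max_right _ _))))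
  · exact dichromaticNumber_le (hh.comp_of_map_adj (φ := (·, Classical.arbitrary W))
      (fun _ _ h => (Prod.ext_iff.mp h).1) fun _ _ huv => Or.inr ⟨huv, rfl⟩)
  · exact dichromaticNumber_le (hh.comp_of_map_adj (φ := (Classical.arbitrary V, ·))
      (fun _ _ h => (Prod.ext_iff.mp h).2) fun _ _ hxy => Or.inl ⟨rfl, hxy⟩)

theorem stmt0 {V W : Type*} [Fintype V] [Fintype W] [Nonempty V] [Nonempty W]
    (GA : V → V → Prop) (HA : W → W → Prop)
    (hG : Irreflexive GA) (hH : Irreflexive HA) :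
    dichromaticNumber (cartAdj GA HA) =
      max (dichromaticNumber GA) (dichromaticNumber HA) :=
  stmt0_general GA HA
end

section
/- Let k ≥ 1 and let f₁ : V(G) → ZMod k and f₂ : V(H) → ZMod k be acyclic colorings of the digraphs G and H (every color class of f₁ is acyclic in G, every color class of f₂ is acyclic in H). Then the coloring f : V(G) × V(H) → ZMod k given by f(u,x) = f₁(u) + f₂(x) is an acyclic coloring of the cartesian product G □ H, i.e., every color class of f induces an acyclic subdigraph of G □ H. -/
/-!
Call an arc monochromatic if its ends have the same colour. A colouring is acyclic exactly when
no vertex lies on a closed walk of monochromatic arcs (`TransGen` of that relation from a vertex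
to itself): a dicycle is such a closed walk, and conversely a shortest closed walk is a dicycle
(here irreflexivity rules out loops). An arc of `G □ H` changes only one coordinate, so when it
is monochromatic for `f₁ + f₂`, cancelling the other summand shows that the coordinate it
changes keeps its colour: it projects to a monochromatic arc of `G` or of `H`. A closed walk has
at least one arc, so a monochromatic closed walk in `G □ H` projects to one in `G` or in `H`.
-/

open Relation List

section

variable {V W C : Type*} {R : V → V → Prop}

theorem List.exists_eq_append_cons_append_cons_of_not_nodup_s1 {l : List V} (h : ¬ l.Nodup) :
    ∃ p x q r, l = p ++ x :: (q ++ x :: r) := by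
  obtain ⟨x, hx⟩ : ∃ x, [x, x] <+ l := by simpa [nodup_iff_sublist] using h
  obtain ⟨r₁, r₂, rfl, hx₁, hx₂⟩ := cons_sublist_iff.1 hx
  obtain ⟨p, q, rfl⟩ := append_of_mem hx₁
  obtain ⟨s, r, rfl⟩ := append_of_mem (singleton_sublist.1 hx₂)
  exact ⟨p, x, q ++ s, r, by simp⟩

theorem IsDicycle.ne_nil {l : List V} (h : IsDicycle R l) : l ≠ [] :=
  ne_nil_of_length_pos (Nat.zero_lt_two.trans_le h.1)

theorem IsDicycle.imp_of_mem {S : V → V → Prop} {l : List V} (h : IsDicycle R l)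
    (H : ∀ a ∈ l, ∀ b ∈ l, R a b → S a b) : IsDicycle S l :=
  ⟨h.1, h.2.1, h.2.2.1.imp_of_mem_imp fun a b ha hb => H a ha b hb,
    fun hl => H _ (getLast_mem hl) _ (head_mem hl) (h.2.2.2 hl)⟩

theorem IsDicycle.transGen_head {l : List V} (h : IsDicycle R l) :
    TransGen R (l.head h.ne_nil) (l.head h.ne_nil) :=
  TransGen.tail' (relationReflTransGen_of_exists_isChain l h.2.2.1 h.ne_nil) (h.2.2.2 h.ne_nil)

/-- If the closed walk `a :: t ++ [a]` repeats a vertex before returning to `a`, the stretch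
between two visits of that vertex is a shorter closed walk; otherwise `a :: t` is a dicycle. -/
theorem exists_isDicycle_of_isChain_cons_append_singleton (hR : Irreflexive R) {a : V}
    {t : List V} (h : (a :: t ++ [a]).IsChain R) : ∃ l, IsDicycle R l := by
  by_cases hnd : (a :: t).Nodup
  · refine ⟨a :: t, ?_, hnd, h.prefix ⟨[a], rfl⟩,
      fun _ => h.rel_getLast_head_of_append (l₁ := a :: t) (l₂ := [a]) _ (cons_ne_nil _ _)⟩
    cases t with
    | nil => exact absurd (isChain_pair.1 h) (hR a)
    | cons => simp
  · obtain ⟨p, x, q, r, hpxqr⟩ := exists_eq_append_cons_append_cons_of_not_nodup_s1 hnd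
    have hlen : q.length < t.length := by
      have := congrArg length hpxqr
      simp only [length_cons, length_append] at this
      omega
    have hx : (x :: q ++ [x]).IsChain R :=
      h.infix ⟨p, r ++ [a], by show _ = (a :: t) ++ [a]; rw [hpxqr]; simp⟩
    exact exists_isDicycle_of_isChain_cons_append_singleton hR hx
termination_by t.length

theorem Relation.TransGen.exists_isDicycle (hR : Irreflexive R) {a : V} (h : TransGen R a a) :
    ∃ l, IsDicycle R l := by
  obtain ⟨b, hab, hba⟩ := TransGen.tail'_iff.1 h
  obtain ⟨t, ht, hlast⟩ := exists_isChain_cons_of_relationReflTransGen hab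
  refine exists_isDicycle_of_isChain_cons_append_singleton hR (t := t)
    (ht.append (isChain_singleton a) ?_)
  simpa [getLast?_eq_some_getLast, hlast] using hba

def monochromaticAdj (Adj : V → V → Prop) (f : V → C) : V → V → Prop :=
  fun a b => Adj a b ∧ f a = f b

theorem IsAcyclicColoring.not_transGen_monochromaticAdj {Adj : V → V → Prop} {f : V → C}
    (hAdj : Irreflexive Adj) (hf : IsAcyclicColoring Adj f) (v : V) :
    ¬ TransGen (monochromaticAdj Adj f) v v := by
  intro h
  obtain ⟨l, hl⟩ := h.exists_isDicycle fun a ha => hAdj a ha.1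
  have hcolor : ∀ v ∈ l, f v = f (l.head hl.ne_nil) :=
    hl.2.2.1.induction _ l (fun _ _ hxy hx => hxy.2.symm.trans hx) fun _ => rfl
  exact hf _ ⟨l, hcolor, hl.imp_of_mem fun _ _ _ _ hab => hab.1⟩

theorem isAcyclicColoring_of_forall_not_transGen_monochromaticAdj {Adj : V → V → Prop} {f : V → C}
    (h : ∀ v, ¬ TransGen (monochromaticAdj Adj f) v v) : IsAcyclicColoring Adj f := by
  rintro c ⟨l, hlc, hl⟩
  exact h _ (hl.imp_of_mem fun a ha b hb hab =>
    ⟨hab, (hlc a ha : f a = c).trans (hlc b hb : f b = c).symm⟩).transGen_head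

theorem Relation.ReflTransGen.fst_of_cartAdj {S : W → W → Prop} {p q : V × W}
    (h : ReflTransGen (cartAdj R S) p q) : ReflTransGen R p.1 q.1 :=
  h.lift' Prod.fst fun _ _ hab =>
    hab.elim (fun h => show ReflTransGen R _ _ from h.1 ▸ .refl) fun h => .single h.1

theorem Relation.ReflTransGen.snd_of_cartAdj {S : W → W → Prop} {p q : V × W}
    (h : ReflTransGen (cartAdj R S) p q) : ReflTransGen S p.2 q.2 :=
  h.lift' Prod.snd fun _ _ hab =>
    hab.elim (fun h => .single h.2) fun h => show ReflTransGen S _ _ from h.2 ▸ .refl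

theorem Relation.TransGen.fst_or_snd_of_cartAdj {S : W → W → Prop} {p q : V × W}
    (h : TransGen (cartAdj R S) p q) : TransGen R p.1 q.1 ∨ TransGen S p.2 q.2 := by
  obtain ⟨r, hpr, hrq⟩ := TransGen.tail'_iff.1 h
  rcases hrq with ⟨-, hS⟩ | ⟨hR, -⟩
  · exact .inr (TransGen.tail' hpr.snd_of_cartAdj hS)
  · exact .inl (TransGen.tail' hpr.fst_of_cartAdj hR)

theorem cartAdj_monochromaticAdj_of_monochromaticAdj_add [Add C] [IsCancelAdd C] {GA : V → V → Prop}
    {HA : W → W → Prop} {f₁ : V → C} {f₂ : W → C} {p q : V × W}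
    (h : monochromaticAdj (cartAdj GA HA) (fun p : V × W => f₁ p.1 + f₂ p.2) p q) :
    cartAdj (monochromaticAdj GA f₁) (monochromaticAdj HA f₂) p q := by
  obtain ⟨⟨h₁, hH⟩ | ⟨hG, h₂⟩, hc : f₁ p.1 + f₂ p.2 = f₁ q.1 + f₂ q.2⟩ := h
  · rw [h₁] at hc
    exact .inl ⟨h₁, hH, add_left_cancel hc⟩
  · rw [h₂] at hc
    exact .inr ⟨⟨hG, add_right_cancel hc⟩, h₂⟩

end

theorem stmt1_general {V W : Type*} (GA : V → V → Prop) (HA : W → W → Prop)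
    (hG : Irreflexive GA) (hH : Irreflexive HA)
    (k : ℕ) (f₁ : V → ZMod k) (f₂ : W → ZMod k)
    (h₁ : IsAcyclicColoring GA f₁) (h₂ : IsAcyclicColoring HA f₂) :
    IsAcyclicColoring (cartAdj GA HA) (fun p : V × W => f₁ p.1 + f₂ p.2) := by
  refine isAcyclicColoring_of_forall_not_transGen_monochromaticAdj fun p hp => ?_
  have hp' : TransGen (cartAdj (monochromaticAdj GA f₁) (monochromaticAdj HA f₂)) p p :=
    TransGen.mono (fun _ _ => cartAdj_monochromaticAdj_of_monochromaticAdj_add) _ _ hp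
  exact hp'.fst_or_snd_of_cartAdj.elim (h₁.not_transGen_monochromaticAdj hG p.1)
    (h₂.not_transGen_monochromaticAdj hH p.2)

theorem stmt1 {V W : Type*} (GA : V → V → Prop) (HA : W → W → Prop)
    (hG : Irreflexive GA) (hH : Irreflexive HA)
    (k : ℕ) (hk : 1 ≤ k) (f₁ : V → ZMod k) (f₂ : W → ZMod k)
    (h₁ : IsAcyclicColoring GA f₁) (h₂ : IsAcyclicColoring HA f₂) :
    IsAcyclicColoring (cartAdj GA HA) (fun p : V × W => f₁ p.1 + f₂ p.2) :=
  stmt1_general GA HA hG hH k f₁ f₂ h₁ h₂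
end

section
/- For all integers n, m ≥ 2, the dichromatic number of the direct product of the dicycles on n and m vertices is exactly 2: χ_a(C⃗_n × C⃗_m) = 2. -/
/-!
A dicycle in `C⃗_n × C⃗_m` advances the first coordinate by one at every arc, so its length
is a multiple of `n` and it meets every first coordinate; hence both `{first coordinate = 0}`,
which spans no arc, and its complement are acyclic. Conversely the arc `p → p + (1, 1)` makes
the orbit of `0` under `(1, 1)` a dicycle, so one colour does not suffice.
-/

section Digraph

variable {V : Type*} {Adj : V → V → Prop}

theorem acyclicSet_of_forall_not_adj {S : Set V} (hS : ∀ u ∈ S, ∀ v ∈ S, ¬ Adj u v) :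
    AcyclicSet Adj S := by
  rintro ⟨l, hlS, hlen, -, hchain, -⟩
  have harc := List.isChain_iff_getElem.mp hchain 0 (by omega)
  exact hS _ (hlS _ (List.getElem_mem _)) _ (hlS _ (List.getElem_mem _)) harc

theorem two_le_of_isAcyclicColoring {l : List V} (hl : IsDicycle Adj l) {k : ℕ}
    {f : V → Fin k} (hf : IsAcyclicColoring Adj f) : 2 ≤ k := by
  by_contra! hk
  have : Subsingleton (Fin k) := Fin.subsingleton_iff_le_one.mpr (by omega)
  obtain ⟨v, hv⟩ := List.exists_mem_of_length_pos (l := l) (by have := hl.1; omega)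
  exact hf (f v) ⟨l, fun u _ => Subsingleton.elim (f u) (f v), hl⟩

theorem dichromaticNumber_eq_two {l : List V} (hl : IsDicycle Adj l) {f : V → Fin 2}
    (hf : IsAcyclicColoring Adj f) : dichromaticNumber Adj = 2 :=
  le_antisymm (Nat.sInf_le ⟨f, hf⟩)
    (le_csInf ⟨2, f, hf⟩ fun _ ⟨_, hg⟩ => two_le_of_isAcyclicColoring hl hg)

section Potential

variable {n : ℕ} {φ : V → ZMod n}

def potentialColoring (φ : V → ZMod n) (v : V) : Fin 2 := if φ v = 0 then 0 else 1

theorem potentialColoring_eq_zero_iff {v : V} : potentialColoring φ v = 0 ↔ φ v = 0 := by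
  unfold potentialColoring
  split_ifs with h <;> simp [h]

variable (hφ : ∀ u v, Adj u v → φ v = φ u + 1)
include hφ

theorem List.IsChain.potential_getElem {l : List V} (hl : l.IsChain Adj) :
    ∀ (k : ℕ) (hk : k < l.length), φ l[k] = φ l[0] + k
  | 0, _ => by simp
  | k + 1, hk => by
    rw [hφ _ _ (List.isChain_iff_getElem.mp hl k hk), hl.potential_getElem k (by omega)]
    push_cast
    ring

theorem IsDicycle.exists_mem_potential_eq {l : List V} (hl : IsDicycle Adj l) (a : ZMod n) :
    ∃ v ∈ l, φ v = a := by
  obtain ⟨hlen, -, hchain, hclose⟩ := hl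
  have hne : l ≠ [] := List.ne_nil_of_length_pos (by omega)
  have hlen_zero : (l.length : ZMod n) = 0 := by
    have h := hφ _ _ (hclose hne)
    rw [List.getLast_eq_getElem, List.head_eq_getElem_zero,
      hchain.potential_getElem hφ (l.length - 1) (by omega), add_assoc, left_eq_add] at h
    rwa [← Nat.sub_add_cancel (by omega : 1 ≤ l.length), Nat.cast_succ]
  have hdvd : n ∣ l.length := (ZMod.natCast_eq_zero_iff _ _).mp hlen_zero
  have : NeZero n := ⟨(Nat.pos_of_dvd_of_pos hdvd (by omega)).ne'⟩
  have hk : (a - φ l[0]).val < l.length := (ZMod.val_lt _).trans_le (Nat.le_of_dvd (by omega) hdvd)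
  refine ⟨l[(a - φ l[0]).val], List.getElem_mem _, ?_⟩
  rw [hchain.potential_getElem hφ _ hk, ZMod.natCast_zmod_val, add_sub_cancel]

theorem isAcyclicColoring_potentialColoring (hn : 2 ≤ n) :
    IsAcyclicColoring Adj (potentialColoring φ) := by
  intro c
  by_cases hc : c = 0
  · subst hc
    refine acyclicSet_of_forall_not_adj fun u hu v hv huv => ?_
    simp only [Set.mem_preimage, Set.mem_singleton_iff, potentialColoring_eq_zero_iff] at hu hv
    have : Fact (1 < n) := ⟨hn⟩
    exact (one_ne_zero : (1 : ZMod n) ≠ 0) (by simpa [hu] using (hφ u v huv).symm.trans hv)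
  · rintro ⟨l, hlS, hl⟩
    obtain ⟨v, hv, hv0⟩ := hl.exists_mem_potential_eq hφ 0
    exact hc ((hlS v hv).symm.trans (potentialColoring_eq_zero_iff.mpr hv0))

end Potential

end Digraph

theorem isDicycle_map_range_addOrderOf {G : Type*} [AddMonoid G] {Adj : G → G → Prop} {x : G}
    (hAdj : ∀ g, Adj g (g + x)) (hx : IsOfFinAddOrder x) (hx0 : x ≠ 0) :
    IsDicycle Adj ((List.range (addOrderOf x)).map (· • x)) := by
  have hord : 2 ≤ addOrderOf x := by
    have := hx.addOrderOf_pos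
    have : addOrderOf x ≠ 1 := fun h => hx0 (AddMonoid.addOrderOf_eq_one_iff.mp h)
    omega
  refine ⟨by simpa using hord, ?_, ?_, fun h => ?_⟩
  · exact (List.nodup_range).map_on fun a ha b hb => nsmul_injOn_Iio_addOrderOf
      (Set.mem_Iio.mpr (List.mem_range.mp ha)) (Set.mem_Iio.mpr (List.mem_range.mp hb))
  · show List.IsChain _ _
    rw [List.isChain_map, List.isChain_range]
    intro k _
    simpa [succ_nsmul] using hAdj (k • x)
  · rw [List.getLast_map, List.getLast_range, List.head_map, List.head_range]
    simpa [← succ_nsmul, Nat.sub_add_cancel (by omega : 1 ≤ addOrderOf x),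
      addOrderOf_nsmul_eq_zero] using hAdj ((addOrderOf x - 1) • x)

theorem stmt5 (n m : ℕ) (hn : 2 ≤ n) (hm : 2 ≤ m) :
    dichromaticNumber (directAdj (dicycleAdj n) (dicycleAdj m)) = 2 := by
  have : NeZero n := ⟨by omega⟩
  have : NeZero m := ⟨by omega⟩
  have : Fact (1 < n) := ⟨hn⟩
  have hdiag := isDicycle_map_range_addOrderOf (x := ((1, 1) : ZMod n × ZMod m))
    (Adj := directAdj (dicycleAdj n) (dicycleAdj m)) (fun _ => ⟨rfl, rfl⟩)
    (isOfFinAddOrder_of_finite _) (by simp [Prod.ext_iff])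
  exact dichromaticNumber_eq_two hdiag
    (isAcyclicColoring_potentialColoring (φ := Prod.fst) (fun _ _ h => h.1) hn)
end

section
/- Let n ≥ 2 be an integer and let H be a bipartite simple graph with at least one edge. Then the chromatic number of the strong product of H with the odd cycle on 2n+1 vertices equals 5: χ(H ⊠ C_{2n+1}) = 5. -/
open SimpleGraph

/-- Strong product of simple graphs. -/
def strongProd {α β : Type*} (G : SimpleGraph α) (H : SimpleGraph β) :
    SimpleGraph (α × β) where
  Adj p q := p ≠ q ∧ (p.1 = q.1 ∨ G.Adj p.1 q.1) ∧ (p.2 = q.2 ∨ H.Adj p.2 q.2)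
  symm := by
    constructor
    rintro p q ⟨hne, h1, h2⟩
    refine ⟨fun h => hne h.symm, ?_, ?_⟩
    · rcases h1 with h | h
      · exact Or.inl h.symm
      · exact Or.inr h.symm
    · rcases h2 with h | h
      · exact Or.inl h.symm
      · exact Or.inr h.symm
  loopless := ⟨fun p h => h.1 rfl⟩


/-! The lower bound comes from an edge `uv` of `H`: in a proper 4-colouring of `K₂ ⊠ C`, the colour
pairs `{c(u,i), c(v,i)}` and `{c(u,j), c(v,j)}` of adjacent `i, j` are disjoint, hence complementary
in the four colours, so membership of a fixed colour in the pair properly 2-colours the odd cycle.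
For the upper bound, `H` maps to `K₂` and `C_{2n+1}` folds onto `C₅` (this needs `n ≥ 2`), and
`K₂ ⊠ C₅` is 5-coloured by `(t, i) ↦ 2i + t mod 5`. -/

namespace strongProd

variable {α α' β β' : Type*} {G : SimpleGraph α} {G' : SimpleGraph α'}
  {H : SimpleGraph β} {H' : SimpleGraph β'}

instance [DecidableEq α] [DecidableEq β] [DecidableRel G.Adj] [DecidableRel H.Adj] :
    DecidableRel (strongProd G H).Adj :=
  fun _ _ => inferInstanceAs (Decidable (_ ∧ _ ∧ _))

lemma adj_of_left_adj {a b : α} (x : β) (hab : G.Adj a b) : (strongProd G H).Adj (a, x) (b, x) :=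
  ⟨fun h => hab.ne (congrArg Prod.fst h), Or.inr hab, Or.inl rfl⟩

lemma adj_of_right_adj {a b : α} {x y : β} (hab : a = b ∨ G.Adj a b) (hxy : H.Adj x y) :
    (strongProd G H).Adj (a, x) (b, y) :=
  ⟨fun h => hxy.ne (congrArg Prod.snd h), hab, Or.inr hxy⟩

def map (f : G →g G') (g : H →g H') : strongProd G H →g strongProd G' H' where
  toFun := Prod.map f g
  map_rel' := by
    rintro ⟨a, x⟩ ⟨b, y⟩ ⟨hne, hab, hxy⟩
    refine ⟨?_, hab.imp (congrArg f) f.map_adj, hxy.imp (congrArg g) g.map_adj⟩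
    rcases hab with hab | hab
    · have hxy : H.Adj x y := hxy.resolve_left fun h => hne (Prod.ext hab h)
      exact fun h => (g.map_adj hxy).ne (congrArg Prod.snd h)
    · exact fun h => (f.map_adj hab).ne (congrArg Prod.fst h)

end strongProd

def SimpleGraph.Hom.ofAdj {α : Type*} {H : SimpleGraph α} {u v : α} (huv : H.Adj u v) :
    (⊤ : SimpleGraph (Fin 2)) →g H where
  toFun := ![u, v]
  map_rel' := by
    intro a b hab
    fin_cases a <;> fin_cases b <;> simp_all [huv.symm]

def cycleGraphHomOfAdjSucc {V : Type*} {G : SimpleGraph V} {m : ℕ} [NeZero m]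
    (f : Fin m → V) (hf : ∀ i, G.Adj (f i) (f (i + 1))) : cycleGraph m →g G where
  toFun := f
  map_rel' := by
    intro i j hij
    obtain _ | _ | m := m
    · exact (NeZero.ne 0 rfl).elim
    · exact (cycleGraph_one_adj hij).elim
    · rw [cycleGraph_adj, sub_eq_iff_eq_add', sub_eq_iff_eq_add'] at hij
      rcases hij with rfl | rfl
      · exact (hf j).symm
      · exact hf i

/-- `0, 1, …, 2n` goes to `0, 1, 2, 3, 4, 3, 4, …, 3, 4`. -/
def cycleGraphFoldFive (n : ℕ) (hn : 2 ≤ n) : cycleGraph (2 * n + 1) →g cycleGraph 5 :=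
  cycleGraphHomOfAdjSucc
    (fun i => ⟨if i.val < 3 then i.val else 3 + (i.val + 1) % 2, by split_ifs <;> omega⟩)
    (by
      intro i
      rw [cycleGraph_adj']
      simp only [Fin.val_sub, Fin.val_add_one, Fin.ext_iff, Fin.val_last]
      have := i.isLt
      have := Nat.mod_two_eq_zero_or_one (i.val + 1)
      split_ifs <;> omega)

lemma cycleGraph_not_colorable_two_of_odd {m : ℕ} (hm : 2 ≤ m) (hodd : Odd m) :
    ¬(cycleGraph m).Colorable 2 := fun h => by
  have := h.chromaticNumber_le
  rw [chromaticNumber_cycleGraph_of_odd m hm hodd] at this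
  norm_num at this

lemma colorable_top_strongProd_cycleGraph_five :
    (strongProd (⊤ : SimpleGraph (Fin 2)) (cycleGraph 5)).Colorable 5 :=
  ⟨Coloring.mk (fun p => 2 * p.2 + Fin.castLE (by norm_num) p.1) (by decide)⟩

lemma fin_four_eq_or_eq_iff_not_eq_or_eq : ∀ a b c d x : Fin 4,
    a ≠ b → a ≠ c → a ≠ d → b ≠ c → b ≠ d → c ≠ d → ((a = x ∨ b = x) ↔ ¬(c = x ∨ d = x)) := by
  decide

lemma colorable_two_of_top_strongProd_colorable_four {V : Type*} {G : SimpleGraph V}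
    (h : (strongProd (⊤ : SimpleGraph (Fin 2)) G).Colorable 4) : G.Colorable 2 := by
  obtain ⟨C⟩ := h
  have hrung (i : V) : C (0, i) ≠ C (1, i) := C.valid (strongProd.adj_of_left_adj i (by simp))
  have hcross {i j : V} (hij : G.Adj i j) (s t : Fin 2) : C (s, i) ≠ C (t, j) :=
    C.valid (strongProd.adj_of_right_adj ((eq_or_ne s t).imp_right id) hij)
  let c : G.Coloring Prop := Coloring.mk (fun i => C (0, i) = 0 ∨ C (1, i) = 0) fun {i j} hij h =>
    iff_not_self <| h ▸ fin_four_eq_or_eq_iff_not_eq_or_eq _ _ _ _ 0 (hrung i)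
      (hcross hij 0 0) (hcross hij 0 1) (hcross hij 1 0) (hcross hij 1 1) (hrung j)
  simpa using c.colorable

theorem stmt8_general {α : Type*} (n : ℕ) (hn : 2 ≤ n) (H : SimpleGraph α)
    (hbip : H.Colorable 2) (hedge : ∃ u v, H.Adj u v) :
    (strongProd H (SimpleGraph.cycleGraph (2 * n + 1))).chromaticNumber = 5 := by
  obtain ⟨u, v, huv⟩ := hedge
  rw [show (5 : ℕ∞) = (4 : ℕ) + 1 from rfl, chromaticNumber_eq_iff_colorable_not_colorable]
  refine ⟨colorable_top_strongProd_cycleGraph_five.of_hom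
    (strongProd.map hbip.some (cycleGraphFoldFive n hn)), fun h4 => ?_⟩
  exact cycleGraph_not_colorable_two_of_odd (by omega) (odd_two_mul_add_one n)
    (colorable_two_of_top_strongProd_colorable_four
      (h4.of_hom (strongProd.map (Hom.ofAdj huv) Hom.id)))

theorem stmt8 {α : Type*} [Fintype α] (n : ℕ) (hn : 2 ≤ n) (H : SimpleGraph α)
    (hbip : H.Colorable 2) (hedge : ∃ u v, H.Adj u v) :
    (strongProd H (SimpleGraph.cycleGraph (2 * n + 1))).chromaticNumber = 5 :=
  stmt8_general n hn H hbip hedge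
end

section
/- The dichromatic numbers of the strong products C⃗_3 ⊠ C⃗_2 and C⃗_3 ⊠ C⃗_3 of dicycles are both equal to 3: χ_a(C⃗_3 ⊠ C⃗_2) = 3 and χ_a(C⃗_3 ⊠ C⃗_3) = 3. -/
/-!
Colouring `(i, j)` by `i + j` makes the colour classes of `C⃗₃ ⊠ C⃗₃` the anti-diagonals, which span
no arc, and colouring `(i, a)` of `C⃗₃ ⊠ C⃗₂` by `i - a` gives classes `{(c, 0), (c + 1, 1)}` spanning a
single arc. Conversely, an acyclic set of `C⃗₃ ⊠ C⃗₂` has at most two vertices (a column is a 2-cycle,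
and one vertex from each column spans a triangle), and an acyclic set of `C⃗₃ ⊠ C⃗₃` has at most four
(every 5-set contains a dicycle of length 3 or 4). Two acyclic classes therefore cover at most
`4 < 6`, resp. `8 < 9`, vertices.
-/

instance {n : ℕ} : DecidableRel (dicycleAdj n) := fun i j => decEq j (i + 1)

instance {V W : Type*} (GA : V → V → Prop) (HA : W → W → Prop) [DecidableEq V] [DecidableEq W]
    [DecidableRel GA] [DecidableRel HA] : DecidableRel (strongAdj GA HA) := fun p q =>
  inferInstanceAs (Decidable ((p.1 = q.1 ∧ HA p.2 q.2) ∨ (GA p.1 q.1 ∧ p.2 = q.2) ∨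
    (GA p.1 q.1 ∧ HA p.2 q.2)))

instance {V : Type*} (Adj : V → V → Prop) [DecidableEq V] [DecidableRel Adj] (l : List V) :
    Decidable (IsDicycle Adj l) :=
  inferInstanceAs (Decidable (2 ≤ l.length ∧ l.Nodup ∧ l.IsChain Adj ∧
    ∀ h : l ≠ [], Adj (l.getLast h) (l.head h)))

section Acyclic

variable {V : Type*} {Adj : V → V → Prop}

theorem AcyclicSet.of_rank {α : Type*} [Preorder α] {S : Set V} (g : V → α)
    (hg : ∀ a ∈ S, ∀ b ∈ S, Adj a b → g a < g b) : AcyclicSet Adj S := by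
  rintro ⟨l, hlS, hlen, -, hchain, hlast⟩
  obtain ⟨a, t, rfl⟩ : ∃ a t, l = a :: t :=
    List.exists_cons_of_ne_nil (by rintro rfl; simp at hlen)
  have ht : t ≠ [] := by rintro rfl; simp at hlen
  have hsorted : ((a :: t).map g).Pairwise (· < ·) :=
    ((List.isChain_map g).2 (List.IsChain.imp_of_mem_imp
      (fun x y hx hy => hg x (hlS x hx) y (hlS y hy)) hchain)).pairwise
  have hup : g a < g (t.getLast ht) :=
    (List.pairwise_cons.1 (by simpa using hsorted)).1 _ (List.mem_map_of_mem (List.getLast_mem ht))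
  have hdown : g (t.getLast ht) < g a := by
    have := hlast (List.cons_ne_nil a t)
    rw [List.getLast_cons ht] at this
    exact hg _ (hlS _ (by simp [List.getLast_mem])) _ (hlS a (by simp)) this
  exact lt_asymm hup hdown

theorem IsAcyclicColoring.of_rank {C α : Type*} [Preorder α] (f : V → C) (g : V → α)
    (hg : ∀ a b, f a = f b → Adj a b → g a < g b) : IsAcyclicColoring Adj f :=
  fun _ => AcyclicSet.of_rank g fun a ha b hb => hg a b (ha.trans hb.symm)

theorem IsAcyclicColoring.of_forall_adj_ne {C : Type*} (f : V → C)
    (hf : ∀ a b, Adj a b → f a ≠ f b) : IsAcyclicColoring Adj f :=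
  .of_rank f (fun _ => 0) fun a b hab h => absurd hab (hf a b h)

theorem AcyclicSet.card_le_of_dicycles {L : List (List V)} (hL : ∀ l ∈ L, IsDicycle Adj l)
    {a : ℕ} (hcover : ∀ S : Finset V, S.card ≤ a ∨ ∃ l ∈ L, ∀ v ∈ l, v ∈ S) {S : Finset V}
    (hS : AcyclicSet Adj S) : S.card ≤ a :=
  (hcover S).resolve_right fun ⟨l, hl, hlS⟩ => hS ⟨l, hlS, hL l hl⟩

theorem IsAcyclicColoring.card_le [Fintype V] {C : Type*} [Fintype C] [DecidableEq C]
    {f : V → C} (hf : IsAcyclicColoring Adj f) {a : ℕ}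
    (ha : ∀ S : Finset V, AcyclicSet Adj S → S.card ≤ a) :
    Fintype.card V ≤ Fintype.card C * a :=
  calc Fintype.card V = ∑ c, (Finset.univ.filter (f · = c)).card :=
        Finset.card_eq_sum_card_fiberwise fun _ _ => Finset.mem_univ _
    _ ≤ ∑ _c : C, a := Finset.sum_le_sum fun c _ => ha _ (by convert hf c; ext; simp)
    _ = Fintype.card C * a := by simp

theorem dichromaticNumber_eq_of_card_lt [Fintype V] {k a : ℕ} {f : V → Fin (k + 1)}
    (hf : IsAcyclicColoring Adj f) (ha : ∀ S : Finset V, AcyclicSet Adj S → S.card ≤ a)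
    (hcard : k * a < Fintype.card V) : dichromaticNumber Adj = k + 1 := by
  have hupper : dichromaticNumber Adj ≤ k + 1 := Nat.sInf_le ⟨f, hf⟩
  obtain ⟨g, hg⟩ : ∃ g : V → Fin (dichromaticNumber Adj), IsAcyclicColoring Adj g :=
    Nat.sInf_mem (s := {k | ∃ g : V → Fin k, IsAcyclicColoring Adj g}) ⟨_, f, hf⟩
  have hlower : Fintype.card V ≤ dichromaticNumber Adj * a := by simpa using hg.card_le ha
  by_contra hne
  have : dichromaticNumber Adj * a ≤ k * a := Nat.mul_le_mul_right a (by omega)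
  omega

end Acyclic

def dicyclesThreeTwo : List (List (ZMod 3 × ZMod 2)) :=
  [[(0, 0), (0, 1)], [(1, 0), (1, 1)], [(2, 0), (2, 1)],
   [(0, 0), (1, 0), (2, 0)], [(0, 0), (1, 0), (2, 1)], [(0, 0), (1, 1), (2, 0)],
   [(0, 0), (1, 1), (2, 1)], [(0, 1), (1, 0), (2, 0)], [(0, 1), (1, 0), (2, 1)],
   [(0, 1), (1, 1), (2, 0)], [(0, 1), (1, 1), (2, 1)]]

/-- The rows, columns and diagonals, and the nine translates of the 4-cycle
`(0,0) → (0,1) → (1,2) → (2,2)`. -/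
def dicyclesThreeThree : List (List (ZMod 3 × ZMod 3)) :=
  [[(0, 0), (0, 1), (0, 2)], [(1, 0), (1, 1), (1, 2)], [(2, 0), (2, 1), (2, 2)],
   [(0, 0), (1, 0), (2, 0)], [(0, 1), (1, 1), (2, 1)], [(0, 2), (1, 2), (2, 2)],
   [(0, 0), (1, 1), (2, 2)], [(0, 1), (1, 2), (2, 0)], [(0, 2), (1, 0), (2, 1)],
   [(0, 0), (0, 1), (1, 2), (2, 2)], [(0, 1), (0, 2), (1, 0), (2, 0)],
   [(0, 2), (0, 0), (1, 1), (2, 1)], [(1, 0), (1, 1), (2, 2), (0, 2)],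
   [(1, 1), (1, 2), (2, 0), (0, 0)], [(1, 2), (1, 0), (2, 1), (0, 1)],
   [(2, 0), (2, 1), (0, 2), (1, 2)], [(2, 1), (2, 2), (0, 0), (1, 0)],
   [(2, 2), (2, 0), (0, 1), (1, 1)]]

theorem acyclicSet_card_le_two {S : Finset (ZMod 3 × ZMod 2)}
    (hS : AcyclicSet (strongAdj (dicycleAdj 3) (dicycleAdj 2)) S) : S.card ≤ 2 :=
  hS.card_le_of_dicycles (L := dicyclesThreeTwo) (by decide) (by decide +kernel)

theorem acyclicSet_card_le_four {S : Finset (ZMod 3 × ZMod 3)}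
    (hS : AcyclicSet (strongAdj (dicycleAdj 3) (dicycleAdj 3)) S) : S.card ≤ 4 :=
  hS.card_le_of_dicycles (L := dicyclesThreeThree) (by decide) (by decide +kernel)

theorem isAcyclicColoring_three_two :
    IsAcyclicColoring (strongAdj (dicycleAdj 3) (dicycleAdj 2))
      (fun p : ZMod 3 × ZMod 2 => (p.1 - p.2.val : ZMod 3)) :=
  .of_rank _ (fun p => p.2.val) (by decide)

theorem isAcyclicColoring_three_three :
    IsAcyclicColoring (strongAdj (dicycleAdj 3) (dicycleAdj 3))
      (fun p : ZMod 3 × ZMod 3 => p.1 + p.2) :=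
  .of_forall_adj_ne _ (by decide)

theorem stmt11 :
    dichromaticNumber (strongAdj (dicycleAdj 3) (dicycleAdj 2)) = 3 ∧
    dichromaticNumber (strongAdj (dicycleAdj 3) (dicycleAdj 3)) = 3 :=
  ⟨dichromaticNumber_eq_of_card_lt (k := 2) isAcyclicColoring_three_two
      (fun _ => acyclicSet_card_le_two) (by decide),
    dichromaticNumber_eq_of_card_lt (k := 2) isAcyclicColoring_three_three
      (fun _ => acyclicSet_card_le_four) (by decide)⟩
end
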